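/- arXiv:2104.07159 — 3 statements merged into one kernel-verified Lean document; each statement's English description precedes it below -/
import Mathlib

section
/- For every finite formal context K = (G, M, I) and every sublattice S of the concept lattice B(K), the triple K_S := (∪{A : (A,B) ∈ S}, ∪{B : (A,B) ∈ S}, ∪{A×B : (A,B) ∈ S}) is a closed-subcontext of K, i.e., every formal concept of K_S is a formal concept of K. -/
/-!
Let `(A, B)` be a concept of `K_S` and let `σ` be the join, in `S`, of all members whose intent
contains `B`. For `g ∈ A`, every incidence `(g, m)` of `K_S` comes from a member of `S` containing
`g`, so the least such member `γ` has `B` in its intent; hence `γ ≤ σ` and `A ⊆ ext σ`. As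
`ext σ × int σ` lies in the incidence of `K_S`, the derivations of `K_S` then force `(A, B) = σ`.
Finiteness guarantees that these joins and meets of arbitrary nonempty subfamilies stay in `S`.
-/

variable {G M : Type*} [Fintype G] [Fintype M]

/-- Attribute derivation A' of an object set A w.r.t. incidence I. -/
def fcaExtDeriv (I : Set (G × M)) (A : Set G) : Set M := {m | ∀ g ∈ A, (g, m) ∈ I}

/-- Object derivation B' of an attribute set B w.r.t. incidence I. -/
def intDeriv (I : Set (G × M)) (B : Set M) : Set G := {g | ∀ m ∈ B, (g, m) ∈ I}

/-- (A,B) is a formal concept of (G,M,I). -/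
def IsConcept (I : Set (G × M)) (A : Set G) (B : Set M) : Prop :=
  fcaExtDeriv I A = B ∧ intDeriv I B = A

/-- Derivation of an object set inside the (sub)context (H,N,J). -/
def subExtDeriv (N : Set M) (J : Set (G × M)) (A : Set G) : Set M :=
  {n ∈ N | ∀ g ∈ A, (g, n) ∈ J}

/-- Derivation of an attribute set inside the (sub)context (H,N,J). -/
def subIntDeriv (H : Set G) (J : Set (G × M)) (B : Set M) : Set G :=
  {h ∈ H | ∀ n ∈ B, (h, n) ∈ J}

/-- (A,B) is a formal concept of the context (H,N,J). -/
def IsSubConcept (H : Set G) (N : Set M) (J : Set (G × M)) (A : Set G) (B : Set M) : Prop :=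
  A ⊆ H ∧ B ⊆ N ∧ subExtDeriv N J A = B ∧ subIntDeriv H J B = A

/-- (H,N,J) is a closed-subcontext of (G,M,I). -/
def IsClosedSubcontext (I : Set (G × M)) (H : Set G) (N : Set M) (J : Set (G × M)) : Prop :=
  J ⊆ I ∩ H ×ˢ N ∧ ∀ A B, IsSubConcept H N J A B → IsConcept I A B

/-- Binary join in the concept lattice of (G,M,I). -/
def conceptJoin (I : Set (G × M)) (c d : Set G × Set M) : Set G × Set M :=
  (intDeriv I (c.2 ∩ d.2), c.2 ∩ d.2)

/-- Binary meet in the concept lattice of (G,M,I). -/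
def conceptMeet (I : Set (G × M)) (c d : Set G × Set M) : Set G × Set M :=
  (c.1 ∩ d.1, fcaExtDeriv I (c.1 ∩ d.1))

/-- S is a sublattice of the concept lattice of (G,M,I). -/
def IsConceptSublattice (I : Set (G × M)) (S : Set (Set G × Set M)) : Prop :=
  S.Nonempty ∧ (∀ c ∈ S, IsConcept I c.1 c.2) ∧
    ∀ c ∈ S, ∀ d ∈ S, conceptJoin I c d ∈ S ∧ conceptMeet I c d ∈ S

/-- Image of the concept set of the subcontext [H,N] under φ₁(A,B)=(A'',A'). -/
def phi1Image (I : Set (G × M)) (H : Set G) (N : Set M) : Set (Set G × Set M) :=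
  {c | ∃ A B, IsSubConcept H N (I ∩ H ×ˢ N) A B ∧
      c = (intDeriv I (fcaExtDeriv I A), fcaExtDeriv I A)}

/-- Image of the concept set of the subcontext [H,N] under φ₂(A,B)=(B',B''). -/
def phi2Image (I : Set (G × M)) (H : Set G) (N : Set M) : Set (Set G × Set M) :=
  {c | ∃ A B, IsSubConcept H N (I ∩ H ×ˢ N) A B ∧
      c = (intDeriv I B, fcaExtDeriv I (intDeriv I B))}

/-- [H,N] is (isomorphic to) a contranominal scale of dimension k in (G,M,I). -/
def IsContranominal (I : Set (G × M)) (k : ℕ) (H : Set G) (N : Set M) : Prop :=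
  ∃ f : Fin k → G, ∃ g : Fin k → M, Function.Injective f ∧ Function.Injective g ∧
    H = Set.range f ∧ N = Set.range g ∧ ∀ i j, (f i, g j) ∈ I ↔ i ≠ j

/-- O is a minimal object generator of the concept with extent A. -/
def IsMinObjGen (I : Set (G × M)) (A : Set G) (O : Set G) : Prop :=
  intDeriv I (fcaExtDeriv I O) = A ∧ ∀ P ⊂ O, intDeriv I (fcaExtDeriv I P) ≠ A

/-- Q is a minimal attribute generator of the concept with intent B. -/
def IsMinAttGen (I : Set (G × M)) (B : Set M) (Q : Set M) : Prop :=
  fcaExtDeriv I (intDeriv I Q) = B ∧ ∀ P ⊂ Q, fcaExtDeriv I (intDeriv I P) ≠ B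

/-- Union of all minimal object generators of the atoms of a Boolean suborder
given by an order embedding f of the powerset of Fin k. -/
def genH (I : Set (G × M)) {k : ℕ} (f : Set (Fin k) → Set G × Set M) : Set G :=
  {g | ∃ i : Fin k, ∃ O : Set G, IsMinObjGen I (f {i}).1 O ∧ g ∈ O}

/-- Union of all minimal attribute generators of the coatoms of a Boolean suborder. -/
def genN (I : Set (G × M)) {k : ℕ} (f : Set (Fin k) → Set G × Set M) : Set M :=
  {m | ∃ i : Fin k, ∃ Q : Set M, IsMinAttGen I (f {i}ᶜ).2 Q ∧ m ∈ Q}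

theorem Set.Finite.exists_mem_map_eq_biInf {α β : Type*} [CompleteLattice β] {S F : Set α}
    {f : α → β} {op : α → α → α} (hop : ∀ a ∈ S, ∀ b ∈ S, op a b ∈ S)
    (hf : ∀ a b, f (op a b) = f a ⊓ f b) (hF : F.Finite) (hne : F.Nonempty) (hFS : F ⊆ S) :
    ∃ c ∈ S, f c = ⨅ d ∈ F, f d := by
  have hclosed : ∀ x ∈ f '' S, ∀ y ∈ f '' S, x ⊓ y ∈ f '' S := by
    rintro _ ⟨a, ha, rfl⟩ _ ⟨b, hb, rfl⟩
    exact ⟨op a b, hop a ha b hb, hf a b⟩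
  obtain ⟨c, hc, hfc⟩ := Finset.inf'_mem (f '' S) hclosed hF.toFinset (by simpa using hne) f
    fun d hd => ⟨d, hFS (hF.mem_toFinset.1 hd), rfl⟩
  refine ⟨c, hc, ?_⟩
  rw [hfc, Finset.inf'_eq_inf, Finset.inf_eq_iInf]
  simp only [Set.Finite.mem_toFinset]

section

variable {α β : Type*} {I : Set (α × β)}

theorem fcaExtDeriv_anti {A A' : Set α} (h : A ⊆ A') : fcaExtDeriv I A' ⊆ fcaExtDeriv I A :=
  fun _ hm g hg => hm g (h hg)

theorem intDeriv_anti {B B' : Set β} (h : B ⊆ B') : intDeriv I B' ⊆ intDeriv I B :=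
  fun _ hg m hm => hg m (h hm)

namespace IsConcept

variable {A A' : Set α} {B B' : Set β}

theorem prod_subset (h : IsConcept I A B) : A ×ˢ B ⊆ I := by
  rintro ⟨g, m⟩ ⟨hg, hm⟩
  rw [← h.1] at hm
  exact hm g hg

theorem snd_subset_of_fst_subset (h : IsConcept I A B) (h' : IsConcept I A' B') (hA : A ⊆ A') :
    B' ⊆ B := by
  rw [← h.1, ← h'.1]
  exact fcaExtDeriv_anti hA

theorem fst_subset_of_snd_subset (h : IsConcept I A B) (h' : IsConcept I A' B') (hB : B ⊆ B') :
    A' ⊆ A := by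
  rw [← h.2, ← h'.2]
  exact intDeriv_anti hB

end IsConcept

theorem subset_subExtDeriv_of_prod_subset {N : Set β} {J : Set (α × β)} {A C : Set α} {D : Set β}
    (hDN : D ⊆ N) (hCD : C ×ˢ D ⊆ J) (hAC : A ⊆ C) : D ⊆ subExtDeriv N J A :=
  fun _ hm => ⟨hDN hm, fun _ hg => hCD ⟨hAC hg, hm⟩⟩

theorem subset_subIntDeriv_of_prod_subset {H : Set α} {J : Set (α × β)} {B : Set β} {C : Set α}
    {D : Set β} (hCH : C ⊆ H) (hCD : C ×ˢ D ⊆ J) (hBD : B ⊆ D) : C ⊆ subIntDeriv H J B :=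
  fun _ hg => ⟨hCH hg, fun _ hm => hCD ⟨hg, hBD hm⟩⟩

end

namespace IsConceptSublattice

variable {I : Set (G × M)} {S : Set (Set G × Set M)} (hS : IsConceptSublattice I S)
include hS

theorem exists_fst_eq_biInter {F : Set (Set G × Set M)} (hne : F.Nonempty) (hFS : F ⊆ S) :
    ∃ c ∈ S, c.1 = ⋂ d ∈ F, d.1 :=
  Set.Finite.exists_mem_map_eq_biInf (op := conceptMeet I) (fun a ha b hb => (hS.2.2 a ha b hb).2)
    (fun _ _ => rfl) (Set.toFinite F) hne hFS

theorem exists_snd_eq_biInter {F : Set (Set G × Set M)} (hne : F.Nonempty) (hFS : F ⊆ S) :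
    ∃ c ∈ S, c.2 = ⋂ d ∈ F, d.2 :=
  Set.Finite.exists_mem_map_eq_biInf (op := conceptJoin I) (fun a ha b hb => (hS.2.2 a ha b hb).1)
    (fun _ _ => rfl) (Set.toFinite F) hne hFS

theorem exists_forall_snd_subset : ∃ c ∈ S, ∀ d ∈ S, d.2 ⊆ c.2 := by
  obtain ⟨c, hc, hc1⟩ := hS.exists_fst_eq_biInter hS.1 subset_rfl
  refine ⟨c, hc, fun d hd => (hS.2.1 c hc).snd_subset_of_fst_subset (hS.2.1 d hd) ?_⟩
  exact hc1 ▸ Set.biInter_subset_of_mem hd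

theorem exists_least_with_mem_fst {g : G} (hg : ∃ c ∈ S, g ∈ c.1) :
    ∃ c ∈ S, g ∈ c.1 ∧ ∀ d ∈ S, g ∈ d.1 → d.2 ⊆ c.2 := by
  obtain ⟨c, hc, hc1⟩ := hS.exists_fst_eq_biInter (F := {d ∈ S | g ∈ d.1}) hg (fun _ hd => hd.1)
  refine ⟨c, hc, hc1 ▸ Set.mem_biInter fun _ hd => hd.2, fun d hd hgd =>
    (hS.2.1 c hc).snd_subset_of_fst_subset (hS.2.1 d hd) ?_⟩
  exact hc1 ▸ Set.biInter_subset_of_mem ⟨hd, hgd⟩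

theorem exists_greatest_with_subset_snd {B : Set M} (hB : ∃ c ∈ S, B ⊆ c.2) :
    ∃ c ∈ S, B ⊆ c.2 ∧ ∀ d ∈ S, B ⊆ d.2 → d.1 ⊆ c.1 := by
  obtain ⟨c, hc, hc2⟩ := hS.exists_snd_eq_biInter (F := {d ∈ S | B ⊆ d.2}) hB (fun _ hd => hd.1)
  refine ⟨c, hc, hc2 ▸ Set.subset_iInter₂ fun _ hd => hd.2, fun d hd hBd =>
    (hS.2.1 c hc).fst_subset_of_snd_subset (hS.2.1 d hd) ?_⟩
  exact hc2 ▸ Set.biInter_subset_of_mem ⟨hd, hBd⟩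

theorem mem_of_isSubConcept {A : Set G} {B : Set M}
    (h : IsSubConcept (⋃ c ∈ S, c.1) (⋃ c ∈ S, c.2) (⋃ c ∈ S, c.1 ×ˢ c.2) A B) : (A, B) ∈ S := by
  obtain ⟨hAH, hBN, hB, hA⟩ := h
  have hB_bot : ∃ c ∈ S, B ⊆ c.2 := by
    obtain ⟨c, hc, hc_bot⟩ := hS.exists_forall_snd_subset
    exact ⟨c, hc, hBN.trans (Set.iUnion₂_subset hc_bot)⟩
  obtain ⟨σ, hσ, hBσ, hσ_max⟩ := hS.exists_greatest_with_subset_snd hB_bot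
  have hAσ : A ⊆ σ.1 := by
    intro g hg
    have hgH : ∃ c ∈ S, g ∈ c.1 := by simpa only [Set.mem_iUnion, exists_prop] using hAH hg
    obtain ⟨γ, hγ, hgγ, hγ_min⟩ := hS.exists_least_with_mem_fst hgH
    have hBγ : B ⊆ γ.2 := by
      intro m hm
      rw [← hB] at hm
      obtain ⟨c, hc, hgc, hmc⟩ : ∃ c ∈ S, g ∈ c.1 ∧ m ∈ c.2 := by
        simpa only [Set.mem_iUnion, Set.mem_prod, exists_prop] using hm.2 g hg
      exact hγ_min c hc hgc hmc
    exact hσ_max γ hγ hBγ hgγ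
  have hσJ : σ.1 ×ˢ σ.2 ⊆ ⋃ c ∈ S, c.1 ×ˢ c.2 :=
    Set.subset_biUnion_of_mem (u := fun c => c.1 ×ˢ c.2) hσ
  have hσB : σ.2 ⊆ B :=
    hB ▸ subset_subExtDeriv_of_prod_subset (Set.subset_biUnion_of_mem (u := Prod.snd) hσ) hσJ hAσ
  have hσA : σ.1 ⊆ A :=
    hA ▸ subset_subIntDeriv_of_prod_subset (Set.subset_biUnion_of_mem (u := Prod.fst) hσ) hσJ hBσ
  rw [← hσA.antisymm hAσ, ← hσB.antisymm hBσ]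
  exact hσ

end IsConceptSublattice

theorem stmt0 (I : Set (G × M)) (S : Set (Set G × Set M)) (hS : IsConceptSublattice I S) :
    IsClosedSubcontext I (⋃ c ∈ S, c.1) (⋃ c ∈ S, c.2) (⋃ c ∈ S, c.1 ×ˢ c.2) :=
  ⟨Set.iUnion₂_subset fun c hc => Set.subset_inter (hS.2.1 c hc).prod_subset
      (Set.prod_mono (Set.subset_biUnion_of_mem (u := Prod.fst) hc)
        (Set.subset_biUnion_of_mem (u := Prod.snd) hc)),
    fun _ _ h => hS.2.1 _ (hS.mem_of_isSubConcept h)⟩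
end

section
/- Let S = (H, N, J) be a closed-subcontext of the finite formal context K = (G, M, I). Then either H = G, or there exists an attribute m ∈ N whose derivation in S equals H (i.e., m^J = H). Dually, either N = M, or there exists an object g ∈ H with g^J = N. -/
variable {G M : Type*} [Fintype G] [Fintype M]

/-! The top concept `(H, Hᴶ)` of `S` is a concept of `K`, so `H = (Hᴶ)ᴵ`. If `Hᴶ` is empty this
extent is all of `G`; otherwise any `m ∈ Hᴶ` has `mᴶ = H`. Dually for the bottom concept `(Nᴶ, N)`. -/

section

omit [Fintype G] [Fintype M]

variable {I J : Set (G × M)} {H : Set G} {N : Set M}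

@[simp]
theorem intDeriv_empty (I : Set (G × M)) : intDeriv I (∅ : Set M) = Set.univ := by
  simp [intDeriv]

@[simp]
theorem fcaExtDeriv_empty (I : Set (G × M)) : fcaExtDeriv I (∅ : Set G) = Set.univ := by
  simp [fcaExtDeriv]

theorem isSubConcept_top (H : Set G) (N : Set M) (J : Set (G × M)) :
    IsSubConcept H N J H (subExtDeriv N J H) :=
  ⟨subset_rfl, Set.sep_subset _ _, rfl,
    Set.sep_eq_self_iff_mem_true.2 fun _ hh _ hn => hn.2 _ hh⟩

theorem isSubConcept_bot (H : Set G) (N : Set M) (J : Set (G × M)) :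
    IsSubConcept H N J (subIntDeriv H J N) N :=
  ⟨Set.sep_subset _ _, subset_rfl,
    Set.sep_eq_self_iff_mem_true.2 fun _ hn _ hh => hh.2 _ hn, rfl⟩

theorem IsClosedSubcontext.eq_univ_or_exists_attr_extent_eq (h : IsClosedSubcontext I H N J) :
    H = Set.univ ∨ ∃ m ∈ N, {h ∈ H | (h, m) ∈ J} = H := by
  have hK : intDeriv I (subExtDeriv N J H) = H := (h.2 _ _ (isSubConcept_top H N J)).2
  rcases (subExtDeriv N J H).eq_empty_or_nonempty with hempty | ⟨m, hmN, hm⟩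
  · left
    rw [← hK, hempty, intDeriv_empty]
  · exact Or.inr ⟨m, hmN, Set.sep_eq_self_iff_mem_true.2 hm⟩

theorem IsClosedSubcontext.eq_univ_or_exists_obj_intent_eq (h : IsClosedSubcontext I H N J) :
    N = Set.univ ∨ ∃ g ∈ H, {n ∈ N | (g, n) ∈ J} = N := by
  have hK : fcaExtDeriv I (subIntDeriv H J N) = N := (h.2 _ _ (isSubConcept_bot H N J)).1
  rcases (subIntDeriv H J N).eq_empty_or_nonempty with hempty | ⟨g, hgH, hg⟩
  · left
    rw [← hK, hempty, fcaExtDeriv_empty]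
  · exact Or.inr ⟨g, hgH, Set.sep_eq_self_iff_mem_true.2 hg⟩

end

theorem stmt3 (I : Set (G × M)) (H : Set G) (N : Set M) (J : Set (G × M))
    (h : IsClosedSubcontext I H N J) :
    (H = Set.univ ∨ ∃ m ∈ N, {h ∈ H | (h, m) ∈ J} = H) ∧
    (N = Set.univ ∨ ∃ g ∈ H, {n ∈ N | (g, n) ∈ J} = N) :=
  ⟨h.eq_univ_or_exists_attr_extent_eq, h.eq_univ_or_exists_obj_intent_eq⟩
end

section
/- Let K be a clarified finite formal context and S₁ = [H₁,N₁], S₂ = [H₂,N₂] two distinct subcontexts of K, both isomorphic to the contranominal scale N^c(k). If H₁ ≠ H₂ then φ₁(S₁) ≠ φ₁(S₂), and if N₁ ≠ N₂ then φ₂(S₁) ≠ φ₂(S₂). -/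
variable {G M : Type*} [Fintype G] [Fintype M]

/-!
In a contranominal scale `[H, N]` every subset `A ⊆ H` is an extent of the scale, and each
object of `H \ A` is separated from `A` by an attribute of `N`, so `A'' ∩ H = A`. Hence the
extents `{A'' | A ⊆ H}` recorded by `φ₁` have as atoms (the minimal ones above `∅''`) exactly the
object closures `{h}''` with `h ∈ H`, and in a clarified context `h ↦ {h}''` is injective: `φ₁`
determines `H`. The statement about `φ₂` is the same statement for the transposed context.
-/

section FormalContext

omit [Fintype G] [Fintype M]

open Set

lemma fcaExtDeriv_eq_upperPolar (I : Set (G × M)) :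
    fcaExtDeriv I = upperPolar (fun g m => (g, m) ∈ I) := rfl

lemma intDeriv_eq_lowerPolar (I : Set (G × M)) :
    intDeriv I = lowerPolar (fun g m => (g, m) ∈ I) := rfl

section Atoms

variable {I : Set (G × M)} {H : Set G}

lemma subset_intDeriv_fcaExtDeriv (A : Set G) : A ⊆ intDeriv I (fcaExtDeriv I A) :=
  subset_lowerPolar_upperPolar _ A

lemma intDeriv_fcaExtDeriv_mono {A B : Set G} (h : A ⊆ B) :
    intDeriv I (fcaExtDeriv I A) ⊆ intDeriv I (fcaExtDeriv I B) :=
  lowerPolar_upperPolar_monotone _ h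

lemma fcaExtDeriv_singleton_eq_of_closure_eq {g h : G}
    (heq : intDeriv I (fcaExtDeriv I {g}) = intDeriv I (fcaExtDeriv I {h})) :
    fcaExtDeriv I {g} = fcaExtDeriv I {h} := by
  simpa only [fcaExtDeriv_eq_upperPolar, intDeriv_eq_lowerPolar,
    upperPolar_lowerPolar_upperPolar] using congrArg (fcaExtDeriv I) heq

lemma nonempty_of_closure_ne_closure_empty {A : Set G}
    (hA : intDeriv I (fcaExtDeriv I A) ≠ intDeriv I (fcaExtDeriv I ∅)) : A.Nonempty :=
  nonempty_iff_ne_empty.2 fun h => hA (by rw [h])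

variable (htrace : ∀ A ⊆ H, intDeriv I (fcaExtDeriv I A) ∩ H ⊆ A)
include htrace

lemma closure_singleton_ne_closure_empty {h : G} (hh : h ∈ H) :
    intDeriv I (fcaExtDeriv I {h}) ≠ intDeriv I (fcaExtDeriv I ∅) := fun heq =>
  htrace ∅ (empty_subset H) ⟨heq ▸ subset_intDeriv_fcaExtDeriv {h} rfl, hh⟩

lemma minimal_closure_iff {X : Set G} :
    Minimal (· ∈ (fun A => intDeriv I (fcaExtDeriv I A)) '' 𝒫 H \
        {intDeriv I (fcaExtDeriv I ∅)}) X ↔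
      ∃ h ∈ H, intDeriv I (fcaExtDeriv I {h}) = X := by
  have hsingle : ∀ {h}, h ∈ H → intDeriv I (fcaExtDeriv I {h}) ∈
      (fun A => intDeriv I (fcaExtDeriv I A)) '' 𝒫 H \ {intDeriv I (fcaExtDeriv I ∅)} :=
    fun hh => ⟨⟨{_}, singleton_subset_iff.2 hh, rfl⟩, closure_singleton_ne_closure_empty htrace hh⟩
  constructor
  · intro hmin
    obtain ⟨⟨A, hAH, rfl⟩, hA⟩ := hmin.1
    obtain ⟨h, hhA⟩ := nonempty_of_closure_ne_closure_empty hA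
    have hle := intDeriv_fcaExtDeriv_mono (I := I) (singleton_subset_iff.2 hhA)
    exact ⟨h, hAH hhA, hle.antisymm (hmin.2 (hsingle (hAH hhA)) hle)⟩
  · rintro ⟨h, hh, rfl⟩
    refine ⟨hsingle hh, ?_⟩
    rintro _ ⟨⟨B, hBH, rfl⟩, hB⟩ hle
    have hBh : B ⊆ {h} := fun b hb =>
      htrace {h} (singleton_subset_iff.2 hh) ⟨hle (subset_intDeriv_fcaExtDeriv B hb), hBH hb⟩
    obtain rfl := (nonempty_of_closure_ne_closure_empty hB).subset_singleton_iff.1 hBh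
    exact le_rfl

lemma eq_setOf_minimal_closure_singleton
    (hclar : ∀ g h : G, fcaExtDeriv I {g} = fcaExtDeriv I {h} → g = h) :
    H = {h | Minimal (· ∈ (fun A => intDeriv I (fcaExtDeriv I A)) '' 𝒫 H \
        {intDeriv I (fcaExtDeriv I ∅)}) (intDeriv I (fcaExtDeriv I {h}))} := by
  ext h
  rw [mem_ofPred_eq, minimal_closure_iff htrace]
  constructor
  · exact fun hh => ⟨h, hh, rfl⟩
  · rintro ⟨h₀, hh₀, heq⟩
    rwa [hclar h h₀ (fcaExtDeriv_singleton_eq_of_closure_eq heq).symm]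

end Atoms

namespace IsContranominal

variable {I : Set (G × M)} {k : ℕ} {H : Set G} {N : Set M}

lemma exists_separating (hS : IsContranominal I k H N) {A : Set G} (hA : A ⊆ H) {x : G}
    (hx : x ∈ H) (hxA : x ∉ A) : ∃ n ∈ N, n ∈ fcaExtDeriv I A ∧ (x, n) ∉ I := by
  obtain ⟨f, g, -, -, rfl, rfl, hI⟩ := hS
  obtain ⟨l, rfl⟩ := hx
  refine ⟨g l, mem_range_self l, fun a ha => ?_, fun h => (hI l l).1 h rfl⟩
  obtain ⟨j, rfl⟩ := hA ha
  exact (hI j l).2 fun hjl => hxA (hjl ▸ ha)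

lemma closure_inter_subset (hS : IsContranominal I k H N) {A : Set G} (hA : A ⊆ H) :
    intDeriv I (fcaExtDeriv I A) ∩ H ⊆ A := by
  rintro x ⟨hxA, hxH⟩
  by_contra hx
  obtain ⟨n, -, hn, hxn⟩ := hS.exists_separating hA hxH hx
  exact hxn (hxA n hn)

lemma isSubConcept (hS : IsContranominal I k H N) {A : Set G} (hA : A ⊆ H) :
    IsSubConcept H N (I ∩ H ×ˢ N) A (subExtDeriv N (I ∩ H ×ˢ N) A) := by
  refine ⟨hA, sep_subset _ _, rfl, Subset.antisymm ?_ fun a ha => ⟨hA ha, fun n hn => hn.2 a ha⟩⟩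
  rintro x ⟨hxH, hx⟩
  by_contra hxA
  obtain ⟨n, hnN, hn, hxn⟩ := hS.exists_separating hA hxH hxA
  exact hxn (hx n ⟨hnN, fun a ha => ⟨hn a ha, hA ha, hnN⟩⟩).1

lemma fst_image_phi1Image (hS : IsContranominal I k H N) :
    Prod.fst '' phi1Image I H N = (fun A => intDeriv I (fcaExtDeriv I A)) '' 𝒫 H := by
  ext X
  constructor
  · rintro ⟨_, ⟨A, B, hAB, rfl⟩, rfl⟩
    exact ⟨A, hAB.1, rfl⟩
  · rintro ⟨A, hA, rfl⟩
    exact ⟨_, ⟨A, _, hS.isSubConcept hA, rfl⟩, rfl⟩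

lemma eq_of_phi1Image_eq (hclar : ∀ g h : G, fcaExtDeriv I {g} = fcaExtDeriv I {h} → g = h)
    {k₂ : ℕ} {H₂ : Set G} {N₂ : Set M} (h₁ : IsContranominal I k H N)
    (h₂ : IsContranominal I k₂ H₂ N₂) (heq : phi1Image I H N = phi1Image I H₂ N₂) : H = H₂ := by
  rw [eq_setOf_minimal_closure_singleton (fun _ => h₁.closure_inter_subset) hclar,
    eq_setOf_minimal_closure_singleton (fun _ => h₂.closure_inter_subset) hclar,
    ← h₁.fst_image_phi1Image, ← h₂.fst_image_phi1Image, heq]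

lemma transpose (hS : IsContranominal I k H N) : IsContranominal (Prod.swap ⁻¹' I) k N H := by
  obtain ⟨f, g, hf, hg, rfl, rfl, hI⟩ := hS
  exact ⟨g, f, hg, hf, rfl, rfl, fun i j => (hI j i).trans ne_comm⟩

end IsContranominal

lemma isSubConcept_transpose_iff {I : Set (G × M)} {H : Set G} {N : Set M} {A : Set G}
    {B : Set M} :
    IsSubConcept N H (Prod.swap ⁻¹' I ∩ N ×ˢ H) B A ↔ IsSubConcept H N (I ∩ H ×ˢ N) A B := by
  rw [← preimage_swap_prod, ← preimage_inter]
  exact ⟨fun ⟨hB, hA, hBA, hAB⟩ => ⟨hA, hB, hAB, hBA⟩, fun ⟨hA, hB, hAB, hBA⟩ => ⟨hB, hA, hBA, hAB⟩⟩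

lemma phi1Image_transpose (I : Set (G × M)) (H : Set G) (N : Set M) :
    phi1Image (Prod.swap ⁻¹' I) N H = Prod.swap ⁻¹' phi2Image I H N := by
  ext ⟨X, Y⟩
  simp only [phi1Image, phi2Image, mem_ofPred_eq, mem_preimage, Prod.swap_prod_mk,
    isSubConcept_transpose_iff, Prod.mk.injEq]
  constructor
  · rintro ⟨B, A, hAB, hX, hY⟩
    exact ⟨A, B, hAB, hY, hX⟩
  · rintro ⟨A, B, hAB, hY, hX⟩
    exact ⟨B, A, hAB, hX, hY⟩

end FormalContext

theorem stmt16_general (I : Set (G × M)) (k : ℕ)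
    (hclar₁ : ∀ g h : G, fcaExtDeriv I {g} = fcaExtDeriv I {h} → g = h)
    (hclar₂ : ∀ m n : M, intDeriv I {m} = intDeriv I {n} → m = n)
    (H₁ H₂ : Set G) (N₁ N₂ : Set M)
    (h1 : IsContranominal I k H₁ N₁) (h2 : IsContranominal I k H₂ N₂) :
    (H₁ ≠ H₂ → phi1Image I H₁ N₁ ≠ phi1Image I H₂ N₂) ∧
    (N₁ ≠ N₂ → phi2Image I H₁ N₁ ≠ phi2Image I H₂ N₂) :=
  ⟨fun hH heq => hH (h1.eq_of_phi1Image_eq hclar₁ h2 heq),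
    fun hN heq => hN (h1.transpose.eq_of_phi1Image_eq hclar₂ h2.transpose
      (by rw [phi1Image_transpose, phi1Image_transpose, heq]))⟩

theorem stmt16 (I : Set (G × M)) (k : ℕ)
    (hclar₁ : ∀ g h : G, fcaExtDeriv I {g} = fcaExtDeriv I {h} → g = h)
    (hclar₂ : ∀ m n : M, intDeriv I {m} = intDeriv I {n} → m = n)
    (H₁ H₂ : Set G) (N₁ N₂ : Set M)
    (h1 : IsContranominal I k H₁ N₁) (h2 : IsContranominal I k H₂ N₂)
    (hne : (H₁, N₁) ≠ (H₂, N₂)) :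
    (H₁ ≠ H₂ → phi1Image I H₁ N₁ ≠ phi1Image I H₂ N₂) ∧
    (N₁ ≠ N₂ → phi2Image I H₁ N₁ ≠ phi2Image I H₂ N₂) :=
  stmt16_general I k hclar₁ hclar₂ H₁ H₂ N₁ N₂ h1 h2
end
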